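/- Let d ≥ 1, a > 0, b ∈ ℝ and β ∈ (0,1]. There exists a constant C = C(d, β) such that every f ∈ 𝐇^{a,b}_{A_β}(𝒯^d) satisfies |f_j|_{A_β} ≤ C · 2^{−aj} (max(j,1))^{(d−1)(b + 1/β)} for all j ∈ ℕ_0; that is, 𝐇^{a,b}_{A_β}(𝒯^d) is embedded (up to the constant C) into 𝐖^{a,b'}_{A_β}(𝒯^d) with b' = b + 1/β. -/

import Mathlib

open MeasureTheory Real Complex
open scoped BigOperators

noncomputable section

instance : Fact (0 < 2 * Real.pi) := ⟨by positivity⟩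

/-- The one-dimensional torus `ℝ / 2πℤ`. -/
abbrev 𝕋 : Type := AddCircle (2 * Real.pi)

/-- The `d`-dimensional torus. -/
abbrev Td (d : ℕ) : Type := Fin d → 𝕋

/-- The normalized Lebesgue measure on the `d`-torus (a probability measure). -/
def μT (d : ℕ) : Measure (Td d) :=
  ((ENNReal.ofReal (2 * Real.pi)) ^ d)⁻¹ • (volume : Measure (Td d))

/-- `L_p` norm (`1 ≤ p < ∞`) with respect to the normalized measure on the torus. -/
def pNorm (d : ℕ) (p : ℝ) (f : Td d → ℂ) : ℝ :=
  (∫ x, ‖f x‖ ^ p ∂(μT d)) ^ (1 / p)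

/-- The multivariate exponential `e^{i(k,x)}`. -/
def eChar {d : ℕ} (k : Fin d → ℤ) (x : Td d) : ℂ := ∏ j, fourier (k j) (x j)

/-- Fourier coefficient `f̂(k)`. -/
def fCoeff {d : ℕ} (f : Td d → ℂ) (k : Fin d → ℤ) : ℂ :=
  ∫ x, f x * (starRingEnd ℂ) (eChar k x) ∂(μT d)

/-- Normalized convolution on the torus. -/
def conv {d : ℕ} (f g : Td d → ℂ) : Td d → ℂ :=
  fun x => ∫ y, f y * g (x - y) ∂(μT d)

/-- The dyadic block `ρ(s) = {k : ⌊2^{s_j-1}⌋ ≤ |k_j| < 2^{s_j}}`. -/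
def rhoFinset (d : ℕ) (s : Fin d → ℕ) : Finset (Fin d → ℤ) :=
  (Fintype.piFinset fun j => Finset.Icc (-(2 ^ s j : ℤ)) (2 ^ s j)).filter
    fun k => ∀ j, ((2 ^ s j : ℤ) / 2) ≤ |k j| ∧ |k j| < 2 ^ s j

/-- The finite set of `s ∈ ℕ_0^d` with `‖s‖₁ = j`. -/
def sLevel (d j : ℕ) : Finset (Fin d → ℕ) :=
  (Fintype.piFinset fun _ => Finset.range (j + 1)).filter fun s => ∑ i, s i = j

/-- The step hyperbolic cross `Q_n = ∪_{‖s‖₁ ≤ n} ρ(s)`. -/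
def Qn (d n : ℕ) : Set (Fin d → ℤ) :=
  {k | ∃ s : Fin d → ℕ, (∑ i, s i) ≤ n ∧ k ∈ rhoFinset d s}

/-- `S_n := min_{‖s‖₁ = n} |ρ(s)|`. -/
def Sn (d n : ℕ) : ℕ :=
  sInf {c : ℕ | ∃ s : Fin d → ℕ, (∑ i, s i) = n ∧ c = (rhoFinset d s).card}

/-- `f` is a trigonometric polynomial with frequencies in `Q`. -/
def trigPolyIn {d : ℕ} (Q : Set (Fin d → ℤ)) (f : Td d → ℂ) : Prop :=
  ∃ (F : Finset (Fin d → ℤ)) (coef : (Fin d → ℤ) → ℂ),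
    ↑F ⊆ Q ∧ ∀ x, f x = ∑ k ∈ F, coef k * eChar k x

/-- Single `l = 1` difference with step `t` in the variable `j`. -/
def singleDiff {d : ℕ} (j : Fin d) (t : ℝ) (f : Td d → ℂ) : Td d → ℂ :=
  fun x => f (x + Pi.single j ((t : ℝ) : 𝕋)) - f x

/-- Mixed `l`-th difference `Δ_t^l(e)`. -/
def mixedDiff {d : ℕ} (l : ℕ) (t : Fin d → ℝ) (e : Finset (Fin d)) (f : Td d → ℂ) :
    Td d → ℂ :=
  (List.finRange d).foldr (fun j g => if j ∈ e then (singleDiff j (t j))^[l] g else g) f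

/-- The class `𝐇^r_q` (with `l = ⌊r⌋ + 1`), defined via mixed differences. -/
def HClass (d : ℕ) (r : ℝ) (q : ENNReal) : Set (Td d → ℂ) :=
  {f | Continuous f ∧
    ∀ (e : Finset (Fin d)) (t : Fin d → ℝ),
      eLpNorm (mixedDiff (⌊r⌋₊ + 1) t e f) q (μT d) ≤
        ENNReal.ofReal (∏ j ∈ e, |t j| ^ r)}

/-- The univariate Bernoulli-type kernel `F_r(x) = 1 + 2∑_{k≥1} k^{-r} cos(kx - rπ/2)`. -/
def FrU (r : ℝ) (x : 𝕋) : ℂ :=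
  1 + 2 * ∑' n : ℕ, ((((n : ℝ) + 1) ^ (-r) *
    (fourier ((n : ℤ) + 1) x * Complex.exp (-(Complex.I * ((r : ℂ) * (Real.pi : ℂ) / 2)))).re
      : ℝ) : ℂ)

/-- The multivariate kernel `F_r(x) = ∏_j F_r(x_j)`. -/
def FrM (d : ℕ) (r : ℝ) (x : Td d) : ℂ := ∏ j, FrU r (x j)

/-- The class `𝐖^r_q = {φ * F_r : ‖φ‖_q ≤ 1}`. -/
def WClass (d : ℕ) (r : ℝ) (q : ENNReal) : Set (Td d → ℂ) :=
  {f | ∃ φ : Td d → ℂ, AEStronglyMeasurable φ (μT d) ∧ eLpNorm φ q (μT d) ≤ 1 ∧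
    f = conv φ (FrM d r)}

/-- The univariate Fejér kernel `𝒦_j`. -/
def fejerK (j : ℕ) (x : 𝕋) : ℂ :=
  ∑ k ∈ Finset.Icc (-(j : ℤ)) (j : ℤ), (((1 : ℝ) - (k.natAbs : ℝ) / (j : ℝ)) : ℂ) * fourier k x

/-- The de la Vallée Poussin kernel `𝒱_m = 2𝒦_{2m} - 𝒦_m`. -/
def vallee (m : ℕ) (x : 𝕋) : ℂ := 2 * fejerK (2 * m) x - fejerK m x

/-- The univariate building blocks `𝒜_s`. -/
def AUni : ℕ → 𝕋 → ℂ
  | 0, _ => 1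
  | 1, x => vallee 1 x - 1
  | (s + 2), x => vallee (2 ^ (s + 1)) x - vallee (2 ^ s) x

/-- The multivariate `𝒜_s`. -/
def AMulti (d : ℕ) (s : Fin d → ℕ) (x : Td d) : ℂ := ∏ j, AUni (s j) (x j)

/-- The operator `A_s(f) := f * 𝒜_s` (normalized convolution). -/
def ASop {d : ℕ} (s : Fin d → ℕ) (f : Td d → ℂ) : Td d → ℂ := conv f (AMulti d s)

/-- The class `𝐇(Q_n)_q = {f ∈ 𝒯(Q_n) : ‖A_s(f)‖_q ≤ 1 ∀ s}`. -/
def HQClass (d n : ℕ) (q : ℝ) : Set (Td d → ℂ) :=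
  {f | trigPolyIn (Qn d n) f ∧ ∀ s : Fin d → ℕ, pNorm d q (ASop s f) ≤ 1}

/-- The Wiener norm of the dyadic piece `f_j = ∑_{‖s‖₁=j} δ_s(f)`:
`‖f_j‖_A = ∑_{‖s‖₁=j} ∑_{k ∈ ρ(s)} |f̂(k)|`. -/
def ANormPiece {d : ℕ} (f : Td d → ℂ) (j : ℕ) : ℝ :=
  ∑ s ∈ sLevel d j, ∑ k ∈ rhoFinset d s, ‖fCoeff f k‖

/-- The `A_β` quasi-norm restricted to frequencies in `S`. -/
def ABetaOn {d : ℕ} (β : ℝ) (S : Finset (Fin d → ℤ)) (f : Td d → ℂ) : ℝ :=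
  (∑ k ∈ S, ‖fCoeff f k‖ ^ β) ^ (1 / β)

/-- The `A_β` quasi-norm of the dyadic piece `f_j`. -/
def ABetaPiece {d : ℕ} (β : ℝ) (f : Td d → ℂ) (j : ℕ) : ℝ :=
  (∑ s ∈ sLevel d j, ∑ k ∈ rhoFinset d s, ‖fCoeff f k‖ ^ β) ^ (1 / β)

/-- `f` has an absolutely convergent Fourier series (w.r.t. the trigonometric system). -/
def absConvFourier {d : ℕ} (f : Td d → ℂ) : Prop :=
  Summable (fun k : Fin d → ℤ => ‖fCoeff f k‖) ∧
    ∀ x, HasSum (fun k : Fin d → ℤ => fCoeff f k * eChar k x) (f x)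

/-- The class `𝐇^{a,b}_{A_β}(𝒯^d)`. -/
def HABClass (d : ℕ) (a b β : ℝ) : Set (Td d → ℂ) :=
  {f | absConvFourier f ∧ ∀ (j : ℕ) (s : Fin d → ℕ), (∑ i, s i) = j →
    ABetaOn β (rhoFinset d s) f ≤
      (2 : ℝ) ^ (-(a * (j : ℝ))) * ((max j 1 : ℕ) : ℝ) ^ (((d : ℝ) - 1) * b)}

/-- The class `𝐖^{a,b}_A(𝒯^d)`. -/
def WABClass (d : ℕ) (a b : ℝ) : Set (Td d → ℂ) :=
  {f | absConvFourier f ∧ ∀ j : ℕ,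
    ANormPiece f j ≤ (2 : ℝ) ^ (-(a * (j : ℝ))) * ((max j 1 : ℕ) : ℝ) ^ (((d : ℝ) - 1) * b)}

/-- The class `𝐖^{a,b}_{A_β}(𝒯^d)`. -/
def WABBetaClass (d : ℕ) (a b β : ℝ) : Set (Td d → ℂ) :=
  {f | absConvFourier f ∧ ∀ j : ℕ,
    ABetaPiece β f j ≤ (2 : ℝ) ^ (-(a * (j : ℝ))) * ((max j 1 : ℕ) : ℝ) ^ (((d : ℝ) - 1) * b)}

/-- The box `Π(N,d) = {k : |k_j| ≤ N_j}`. -/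
def PiN (d : ℕ) (N : Fin d → ℕ) : Finset (Fin d → ℤ) :=
  Fintype.piFinset fun j => Finset.Icc (-(N j : ℤ)) (N j)

/-- `θ(N) = ∏_j (2N_j + 1)`. -/
def thetaN (d : ℕ) (N : Fin d → ℕ) : ℕ := ∏ j, (2 * N j + 1)

end

lemma card_sLevel_le (d j : ℕ) (hd : 1 ≤ d) :
    (sLevel d j).card ≤ (j + 1) ^ (d - 1) := by
  obtain ⟨m, rfl⟩ : ∃ m, d = m + 1 := ⟨d - 1, by omega⟩
  have h : (sLevel (m + 1) j).card ≤
      (Fintype.piFinset fun _ : Fin m => Finset.range (j + 1)).card := by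
    apply Finset.card_le_card_of_injOn (fun s => s ∘ Fin.castSucc)
    · intro s hs
      simp only [Finset.mem_coe, sLevel, Finset.mem_filter, Fintype.mem_piFinset, Finset.mem_range] at hs ⊢
      intro i
      exact hs.1 _
    · intro s hs t ht h
      simp only [Finset.mem_coe, sLevel, Finset.mem_filter, Fintype.mem_piFinset,
        Finset.mem_range] at hs ht
      funext i
      refine Fin.lastCases ?_ (fun i => congrFun h i) i
      have hs' := hs.2
      have ht' := ht.2
      rw [Fin.sum_univ_castSucc] at hs' ht'
      have hsum : ∑ i : Fin m, s (Fin.castSucc i) = ∑ i : Fin m, t (Fin.castSucc i) :=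
        Finset.sum_congr rfl fun i _ => congrFun h i
      omega
  simpa [Fintype.card_piFinset] using h

/-- The embedding (5.6): `𝐇^{a,b}_{A_β} ↪ 𝐖^{a,b'}_{A_β}` with `b' = b + 1/β`. -/
theorem statement14 (d : ℕ) (hd : 1 ≤ d) (a b β : ℝ) (ha : 0 < a) (hβ0 : 0 < β)
    (hβ1 : β ≤ 1) :
    ∃ C : ℝ, 0 < C ∧ ∀ f ∈ HABClass d a b β, ∀ j : ℕ,
      ABetaPiece β f j ≤
        C * (2 : ℝ) ^ (-(a * (j : ℝ))) *
          ((max j 1 : ℕ) : ℝ) ^ (((d : ℝ) - 1) * (b + 1 / β)) := by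
  have hd1 : (1 : ℝ) ≤ (d : ℝ) := by exact_mod_cast hd
  set e : ℝ := ((d : ℝ) - 1) / β with he
  have he0 : 0 ≤ e := div_nonneg (by linarith) hβ0.le
  refine ⟨(2 : ℝ) ^ e, Real.rpow_pos_of_pos two_pos e, ?_⟩
  intro f hf j
  set M : ℝ := ((max j 1 : ℕ) : ℝ) with hM
  have hM1 : (1 : ℝ) ≤ M := by
    rw [hM]; exact_mod_cast Nat.le_max_right j 1
  have hMj : (j : ℝ) ≤ M := by
    rw [hM]; exact_mod_cast Nat.le_max_left j 1
  have hMpos : (0 : ℝ) < M := lt_of_lt_of_le one_pos hM1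
  set B : ℝ := (2 : ℝ) ^ (-(a * (j : ℝ))) * M ^ (((d : ℝ) - 1) * b) with hB
  have hBpos : 0 < B := by
    exact mul_pos (Real.rpow_pos_of_pos two_pos _) (Real.rpow_pos_of_pos hMpos _)
  -- inner sums are bounded by B^β
  have hinner : ∀ s ∈ sLevel d j,
      ∑ k ∈ rhoFinset d s, ‖fCoeff f k‖ ^ β ≤ B ^ β := by
    intro s hs
    have hsj : ∑ i, s i = j := (Finset.mem_filter.mp hs).2
    have h1 := hf.2 j s hsj
    have hnn : (0 : ℝ) ≤ ∑ k ∈ rhoFinset d s, ‖fCoeff f k‖ ^ β :=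
      Finset.sum_nonneg fun k _ => Real.rpow_nonneg (norm_nonneg _) _
    have hAnn : 0 ≤ ABetaOn β (rhoFinset d s) f := Real.rpow_nonneg hnn _
    have heq : (∑ k ∈ rhoFinset d s, ‖fCoeff f k‖ ^ β) =
        (ABetaOn β (rhoFinset d s) f) ^ β := by
      rw [ABetaOn, ← Real.rpow_mul hnn, one_div, inv_mul_cancel₀ hβ0.ne', Real.rpow_one]
    rw [heq]
    exact Real.rpow_le_rpow hAnn h1 hβ0.le
  have htot : ∑ s ∈ sLevel d j, ∑ k ∈ rhoFinset d s, ‖fCoeff f k‖ ^ β ≤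
      ((j : ℝ) + 1) ^ (d - 1) * B ^ β := by
    calc ∑ s ∈ sLevel d j, ∑ k ∈ rhoFinset d s, ‖fCoeff f k‖ ^ β
        ≤ (sLevel d j).card * (B ^ β) := by
          rw [← nsmul_eq_mul]
          exact Finset.sum_le_card_nsmul _ _ _ hinner
      _ ≤ ((j : ℝ) + 1) ^ (d - 1) * B ^ β := by
          apply mul_le_mul_of_nonneg_right _ (Real.rpow_nonneg hBpos.le _)
          have := card_sLevel_le d j hd
          calc ((sLevel d j).card : ℝ) ≤ (((j + 1) ^ (d - 1) : ℕ) : ℝ) := by exact_mod_cast this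
            _ = ((j : ℝ) + 1) ^ (d - 1) := by push_cast; ring
  have htotnn : (0 : ℝ) ≤ ∑ s ∈ sLevel d j, ∑ k ∈ rhoFinset d s, ‖fCoeff f k‖ ^ β :=
    Finset.sum_nonneg fun s _ =>
      Finset.sum_nonneg fun k _ => Real.rpow_nonneg (norm_nonneg _) _
  have hjpos : (0 : ℝ) ≤ (j : ℝ) + 1 := by positivity
  have key : ABetaPiece β f j ≤ (((j : ℝ) + 1) ^ (d - 1) * B ^ β) ^ (1 / β) :=
    Real.rpow_le_rpow htotnn htot (by positivity)
  have hrhs : (((j : ℝ) + 1) ^ (d - 1) * B ^ β) ^ (1 / β) =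
      ((j : ℝ) + 1) ^ e * B := by
    rw [Real.mul_rpow (by positivity) (Real.rpow_nonneg hBpos.le _),
      ← Real.rpow_mul hBpos.le, mul_one_div, div_self hβ0.ne', Real.rpow_one,
      ← Real.rpow_natCast ((j : ℝ) + 1) (d - 1), ← Real.rpow_mul hjpos]
    congr 2
    rw [he]
    have : ((d - 1 : ℕ) : ℝ) = (d : ℝ) - 1 := by
      push_cast [Nat.cast_sub hd]; ring
    rw [this]; ring
  rw [hrhs] at key
  refine key.trans ?_
  -- (j+1)^e ≤ 2^e * M^e
  have hj2M : (j : ℝ) + 1 ≤ 2 * M := by linarith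
  have step : ((j : ℝ) + 1) ^ e ≤ (2 : ℝ) ^ e * M ^ e := by
    calc ((j : ℝ) + 1) ^ e ≤ (2 * M) ^ e := Real.rpow_le_rpow hjpos hj2M he0
      _ = (2 : ℝ) ^ e * M ^ e := Real.mul_rpow two_pos.le hMpos.le
  calc ((j : ℝ) + 1) ^ e * B ≤ ((2 : ℝ) ^ e * M ^ e) * B :=
        mul_le_mul_of_nonneg_right step hBpos.le
    _ = (2 : ℝ) ^ e * (2 : ℝ) ^ (-(a * (j : ℝ))) * M ^ (((d : ℝ) - 1) * (b + 1 / β)) := by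
        rw [hB]
        have : M ^ (((d : ℝ) - 1) * (b + 1 / β)) =
            M ^ (((d : ℝ) - 1) * b) * M ^ e := by
          rw [← Real.rpow_add hMpos, he]; ring_nf
        rw [this]; ring
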